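/- arXiv:0911.0182 — 2 statements merged into one kernel-verified Lean document; each statement's English description precedes it below -/
import Mathlib

section
/- Let V₁ = [[1,0],[0,0]] and V₂ = [[1,0],[0,2]], and let ρ be a 2×2 density matrix with ρ₁₁, ρ₂₂ > 0 its diagonal entries. Then the Chapman–Kolmogorov identity fails: tr(V₁V₁ρV₁*V₁*)²/tr(V₁ρV₁*)² + [tr(V₂V₁ρV₁*V₂*)/tr(V₁ρV₁*)]·[tr(V₁V₂ρV₂*V₁*)/tr(V₂ρV₂*)] = 1 + ρ₁₁/(ρ₁₁ + 4ρ₂₂) ≠ 2 = tr(V₁V₁V₁ρV₁*V₁*V₁*)/tr(V₁ρV₁*) + tr(V₁V₂V₁ρV₁*V₂*V₁*)/tr(V₁ρV₁*). -/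
open Matrix ComplexOrder

theorem stmt_9 (V₁ V₂ : Matrix (Fin 2) (Fin 2) ℂ)
    (hV₁ : V₁ = !![1, 0; 0, 0]) (hV₂ : V₂ = !![1, 0; 0, 2])
    (ρ : Matrix (Fin 2) (Fin 2) ℂ) (hρ : ρ.PosSemidef) (htr : ρ.trace = 1)
    (h11 : 0 < (ρ 0 0).re) (h22 : 0 < (ρ 1 1).re) :
    ((V₁ * V₁ * ρ * V₁ᴴ * V₁ᴴ).trace ^ 2 / (V₁ * ρ * V₁ᴴ).trace ^ 2 +
        ((V₂ * V₁ * ρ * V₁ᴴ * V₂ᴴ).trace / (V₁ * ρ * V₁ᴴ).trace) *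
          ((V₁ * V₂ * ρ * V₂ᴴ * V₁ᴴ).trace / (V₂ * ρ * V₂ᴴ).trace)
      = 1 + ρ 0 0 / (ρ 0 0 + 4 * ρ 1 1)) ∧
    (1 + ρ 0 0 / (ρ 0 0 + 4 * ρ 1 1) ≠ 2) ∧
    ((V₁ * V₁ * V₁ * ρ * V₁ᴴ * V₁ᴴ * V₁ᴴ).trace / (V₁ * ρ * V₁ᴴ).trace +
        (V₁ * V₂ * V₁ * ρ * V₁ᴴ * V₂ᴴ * V₁ᴴ).trace / (V₁ * ρ * V₁ᴴ).trace = 2) := by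
  subst hV₁ hV₂
  have h00 : (ρ 0 0) ≠ 0 := fun h => by simp [h] at h11
  have hden : (ρ 0 0 + 4 * ρ 1 1) ≠ 0 := by
    intro h
    have := congrArg Complex.re h
    simp at this
    linarith
  have e1 : (!![1, 0; 0, 0] * !![1, 0; 0, 0] * ρ * !![1, 0; 0, 0]ᴴ * !![1, 0; 0, 0]ᴴ).trace
      = ρ 0 0 := by
    simp [Matrix.trace_fin_two, Matrix.mul_apply, Matrix.vecMul, dotProduct,
      Matrix.conjTranspose_apply, Fin.sum_univ_two]
  have e2 : (!![1, 0; 0, 0] * ρ * !![1, 0; 0, 0]ᴴ).trace = ρ 0 0 := by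
    simp [Matrix.trace_fin_two, Matrix.mul_apply, Matrix.vecMul, dotProduct,
      Matrix.conjTranspose_apply, Fin.sum_univ_two]
  have e3 : (!![1, 0; 0, 2] * !![1, 0; 0, 0] * ρ * !![1, 0; 0, 0]ᴴ * !![1, 0; 0, 2]ᴴ).trace
      = ρ 0 0 := by
    simp [Matrix.trace_fin_two, Matrix.mul_apply, Matrix.vecMul, dotProduct,
      Matrix.conjTranspose_apply, Fin.sum_univ_two]
  have e4 : (!![1, 0; 0, 0] * !![1, 0; 0, 2] * ρ * !![1, 0; 0, 2]ᴴ * !![1, 0; 0, 0]ᴴ).trace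
      = ρ 0 0 := by
    simp [Matrix.trace_fin_two, Matrix.mul_apply, Matrix.vecMul, dotProduct,
      Matrix.conjTranspose_apply, Fin.sum_univ_two]
  have e5 : (!![1, 0; 0, 2] * ρ * !![1, 0; 0, 2]ᴴ).trace = ρ 0 0 + 4 * ρ 1 1 := by
    simp [Matrix.trace_fin_two, Matrix.mul_apply, Matrix.vecMul, dotProduct,
      Matrix.conjTranspose_apply, Fin.sum_univ_two, Complex.conj_ofNat]
    ring
  have e6 : (!![1, 0; 0, 0] * !![1, 0; 0, 0] * !![1, 0; 0, 0] * ρ * !![1, 0; 0, 0]ᴴ *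
      !![1, 0; 0, 0]ᴴ * !![1, 0; 0, 0]ᴴ).trace = ρ 0 0 := by
    simp [Matrix.trace_fin_two, Matrix.mul_apply, Matrix.vecMul, dotProduct,
      Matrix.conjTranspose_apply, Fin.sum_univ_two]
  have e7 : (!![1, 0; 0, 0] * !![1, 0; 0, 2] * !![1, 0; 0, 0] * ρ * !![1, 0; 0, 0]ᴴ *
      !![1, 0; 0, 2]ᴴ * !![1, 0; 0, 0]ᴴ).trace = ρ 0 0 := by
    simp [Matrix.trace_fin_two, Matrix.mul_apply, Matrix.vecMul, dotProduct,
      Matrix.conjTranspose_apply, Fin.sum_univ_two]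
  rw [e1, e2, e3, e4, e5, e6, e7]
  refine ⟨by field_simp, ?_, by field_simp; ring⟩
  intro h
  have h1 : ρ 0 0 / (ρ 0 0 + 4 * ρ 1 1) = 1 := by linear_combination h
  rw [div_eq_one_iff_eq hden] at h1
  have h2 : (4 : ℂ) * ρ 1 1 = 0 := by linear_combination -h1
  have := congrArg Complex.re h2
  simp at this
  linarith
end

section
/- Let (F_i)_{i=1..k} be continuous self-maps of a compact metric space M and ν a probability measure on M invariant for the Markov operator of some QIFS with probabilities pᵢ (Σpᵢ = 1 pointwise). Define h₀(ν) = inf over bounded positive measurable f of ∫ log(Σᵢ f(F_i(x))/f(x)) dν(x). Then 0 ≤ h₀(ν) ≤ log k. -/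
/-!
Taking `f ≡ 1` shows that `log k` is a candidate value. For the lower bound, each `f (Fᵢ x)` is at
most `∑ⱼ f (Fⱼ x)`, so `log ∑ᵢ f (Fᵢ x) ≥ ∑ᵢ pᵢ x * log f (Fᵢ x)` because `∑ᵢ pᵢ x = 1`;
invariance of `ν` under the Markov operator turns the integral of the right-hand side into
`∫ log f dν`, so the candidate integral is nonnegative whenever `log f` is integrable. A positive
`f` that is only bounded above is replaced by `f + δ`: the ratio `(∑ᵢ f (Fᵢ x) + k δ) / (f x + δ)`
lies between `∑ᵢ f (Fᵢ x) / f x` and `k`, so dominated convergence lets `δ → 0`.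
-/

open MeasureTheory Filter

/-- The set of candidate values `∫ log( (Σᵢ f∘Fᵢ) / f ) dν` over bounded positive
measurable functions `f`, whose infimum defines the entropy `h₀(ν)`. -/
noncomputable def entropyCandidates {M : Type*} [MeasurableSpace M] {k : ℕ}
    (F : Fin k → M → M) (ν : Measure M) : Set ℝ :=
  {r | ∃ f : M → ℝ, Measurable f ∧ (∀ x, 0 < f x) ∧ (∃ C, ∀ x, f x ≤ C) ∧
    r = ∫ x, Real.log ((∑ i, f (F i x)) / f x) ∂ν}

def IsMarkovInvariant {M : Type*} [MeasurableSpace M] {k : ℕ} (F : Fin k → M → M)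
    (p : Fin k → M → ℝ) (ν : Measure M) : Prop :=
  ∀ B : Set M, MeasurableSet B → (ν B).toReal = ∑ i, ∫ x in (F i) ⁻¹' B, p i x ∂ν

section MarkovInvariance

variable {M : Type*} [MeasurableSpace M] {ν : Measure M}

lemma integrable_mul_comp_of_integrable_map_withDensity {T : M → M} {q g : M → ℝ}
    (hT : Measurable T) (hq : Measurable q) (hq0 : ∀ x, 0 ≤ q x)
    (hg : Integrable g ((ν.withDensity fun x => ENNReal.ofReal (q x)).map T)) :
    Integrable (fun x => q x * g (T x)) ν := by
  rw [integrable_map_measure hg.1 hT.aemeasurable] at hg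
  have := (integrable_withDensity_iff_integrable_smul hq.real_toNNReal).1 hg
  simpa [NNReal.smul_def, Real.coe_toNNReal _ (hq0 _)] using this

lemma integral_map_withDensity_eq_integral_mul_comp {T : M → M} {q g : M → ℝ}
    (hT : Measurable T) (hq : Measurable q) (hq0 : ∀ x, 0 ≤ q x)
    (hg : AEStronglyMeasurable g ((ν.withDensity fun x => ENNReal.ofReal (q x)).map T)) :
    ∫ x, g x ∂(ν.withDensity fun x => ENNReal.ofReal (q x)).map T = ∫ x, q x * g (T x) ∂ν := by
  rw [integral_map hT.aemeasurable hg]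
  refine (integral_withDensity_eq_integral_smul hq.real_toNNReal (g ∘ T)).trans ?_
  simp [NNReal.smul_def, Real.coe_toNNReal _ (hq0 _)]

variable [IsFiniteMeasure ν] {k : ℕ} {F : Fin k → M → M} {p : Fin k → M → ℝ}

lemma sum_map_withDensity_eq_of_invariant (hF : ∀ i, Measurable (F i))
    (hp0 : ∀ i x, 0 ≤ p i x) (hpi : ∀ i, Integrable (p i) ν)
    (hinv : IsMarkovInvariant F p ν) :
    ∑ i, (ν.withDensity fun x => ENNReal.ofReal (p i x)).map (F i) = ν := by
  ext B hB
  have hterm : ∀ i, (ν.withDensity fun x => ENNReal.ofReal (p i x)).map (F i) B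
      = ENNReal.ofReal (∫ x in (F i) ⁻¹' B, p i x ∂ν) := fun i => by
    rw [Measure.map_apply (hF i) hB, withDensity_apply _ (hF i hB),
      ofReal_integral_eq_lintegral_ofReal (hpi i).integrableOn (ae_of_all _ (hp0 i))]
  rw [Measure.finsetSum_apply, Finset.sum_congr rfl fun i _ => hterm i,
    ← ENNReal.ofReal_sum_of_nonneg fun i _ => setIntegral_nonneg (hF i hB) fun x _ => hp0 i x,
    ← hinv B hB, ENNReal.ofReal_toReal (measure_ne_top ν B)]

lemma integrable_mul_comp_and_sum_integral_eq_of_invariant (hF : ∀ i, Measurable (F i))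
    (hpm : ∀ i, Measurable (p i)) (hp0 : ∀ i x, 0 ≤ p i x) (hpi : ∀ i, Integrable (p i) ν)
    (hinv : IsMarkovInvariant F p ν)
    {g : M → ℝ} (hg : Integrable g ν) :
    (∀ i, Integrable (fun x => p i x * g (F i x)) ν) ∧
      ∑ i, ∫ x, p i x * g (F i x) ∂ν = ∫ x, g x ∂ν := by
  have hν := sum_map_withDensity_eq_of_invariant hF hp0 hpi hinv
  rw [← hν] at hg
  have hgi := integrable_finsetSum_measure.1 hg
  refine ⟨fun i => integrable_mul_comp_of_integrable_map_withDensity (hF i) (hpm i) (hp0 i)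
    (hgi i (Finset.mem_univ i)), ?_⟩
  conv_rhs => rw [← hν, integral_finsetSum_measure hgi]
  exact Finset.sum_congr rfl fun i hi =>
    (integral_map_withDensity_eq_integral_mul_comp (hF i) (hpm i) (hp0 i) (hgi i hi).1).symm

end MarkovInvariance

section LogBounds

lemma sum_mul_log_le_log_sum {ι : Type*} {s : Finset ι} {w a : ι → ℝ} (hw0 : ∀ i ∈ s, 0 ≤ w i)
    (hw1 : ∑ i ∈ s, w i = 1) (ha : ∀ i ∈ s, 0 < a i) :
    ∑ i ∈ s, w i * Real.log (a i) ≤ Real.log (∑ i ∈ s, a i) := calc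
  ∑ i ∈ s, w i * Real.log (a i) ≤ ∑ i ∈ s, w i * Real.log (∑ j ∈ s, a j) := by
    refine Finset.sum_le_sum fun i hi => mul_le_mul_of_nonneg_left ?_ (hw0 i hi)
    exact Real.log_le_log (ha i hi) (Finset.single_le_sum (fun j hj => (ha j hj).le) hi)
  _ = Real.log (∑ i ∈ s, a i) := by rw [← Finset.sum_mul, hw1, one_mul]

lemma abs_log_add_mul_div_add_le {a b c δ : ℝ} (ha : 0 < a) (hb : 0 < b) (hc : 0 < c)
    (hδ : 0 ≤ δ) :
    |Real.log ((a + c * δ) / (b + δ))| ≤ |Real.log (a / b)| + |Real.log c| := by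
  have hbδ : 0 < b + δ := by positivity
  have hab : 0 < a / b := div_pos ha hb
  have hmin : min (a / b) c ≤ (a + c * δ) / (b + δ) := by
    rw [le_div_iff₀ hbδ, mul_add]
    gcongr
    · exact (mul_le_mul_of_nonneg_right (min_le_left _ _) hb.le).trans_eq
        (div_mul_cancel₀ a hb.ne')
    · exact min_le_right _ _
  have hmax : (a + c * δ) / (b + δ) ≤ max (a / b) c := by
    rw [div_le_iff₀ hbδ, mul_add]
    gcongr
    · exact (div_mul_cancel₀ a hb.ne').symm.trans_le
        (mul_le_mul_of_nonneg_right (le_max_left _ _) hb.le)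
    · exact le_max_right _ _
  have hlog_min := Real.log_le_log (lt_min hab hc) hmin
  have hlog_max := Real.log_le_log (lt_min hab hc |>.trans_le hmin) hmax
  refine (abs_le_max_abs_abs hlog_min hlog_max).trans (max_le ?_ ?_)
  · rcases min_choice (a / b) c with h | h <;> rw [h] <;> simp
  · rcases max_choice (a / b) c with h | h <;> rw [h] <;> simp

lemma tendsto_log_add_mul_div_add {a b : ℝ} (c : ℝ) (ha : 0 < a) (hb : 0 < b) :
    Tendsto (fun δ => Real.log ((a + c * δ) / (b + δ))) (nhds 0) (nhds (Real.log (a / b))) := by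
  have h : Tendsto (fun δ => (a + c * δ) / (b + δ)) (nhds 0) (nhds ((a + c * 0) / (b + 0))) :=
    ((continuous_const.add (continuous_const.mul continuous_id)).tendsto 0).div
      ((continuous_const.add continuous_id).tendsto 0) (by simpa using hb.ne')
  simpa using h.log (by simpa using (div_pos ha hb).ne')

lemma integrable_log_of_le_of_le {M : Type*} [MeasurableSpace M] {ν : Measure M}
    [IsFiniteMeasure ν] {f : M → ℝ} (hfm : Measurable f) {ε C : ℝ} (hε : 0 < ε)
    (hεf : ∀ x, ε ≤ f x) (hfC : ∀ x, f x ≤ C) : Integrable (fun x => Real.log (f x)) ν :=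
  .of_bound hfm.log.aestronglyMeasurable (max |Real.log ε| |Real.log C|) <| ae_of_all _ fun x =>
    abs_le_max_abs_abs (Real.log_le_log hε (hεf x)) (Real.log_le_log (hε.trans_le (hεf x)) (hfC x))

end LogBounds

section EntropyLowerBound

variable {M : Type*} [MeasurableSpace M] {k : ℕ} {F : Fin k → M → M} {p : Fin k → M → ℝ}
  {ν : Measure M}

lemma integral_log_sum_comp_div_nonneg_of_integrable_log [IsFiniteMeasure ν]
    (hF : ∀ i, Measurable (F i)) (hpm : ∀ i, Measurable (p i)) (hp0 : ∀ i x, 0 ≤ p i x)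
    (hpsum : ∀ x, ∑ i, p i x = 1)
    (hinv : IsMarkovInvariant F p ν)
    {f : M → ℝ} (hf : ∀ x, 0 < f x) (hlog : Integrable (fun x => Real.log (f x)) ν) :
    0 ≤ ∫ x, Real.log ((∑ i, f (F i x)) / f x) ∂ν := by
  by_cases hint : Integrable (fun x => Real.log ((∑ i, f (F i x)) / f x)) ν
  swap
  · rw [integral_undef hint]
  have hp1 : ∀ i x, p i x ≤ 1 := fun i x =>
    hpsum x ▸ Finset.single_le_sum (fun j _ => hp0 j x) (Finset.mem_univ i)
  have hpi : ∀ i, Integrable (p i) ν := fun i =>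
    .of_bound (hpm i).aestronglyMeasurable 1 <| ae_of_all _ fun x => by
      rw [Real.norm_of_nonneg (hp0 i x)]; exact hp1 i x
  obtain ⟨hterm, hsum⟩ :=
    integrable_mul_comp_and_sum_integral_eq_of_invariant hF hpm hp0 hpi hinv hlog
  have hpoint : ∀ x, ∑ i, p i x * Real.log (f (F i x)) - Real.log (f x) ≤
      Real.log ((∑ i, f (F i x)) / f x) := fun x => by
    obtain ⟨i, -, -⟩ := Finset.exists_ne_zero_of_sum_ne_zero (hpsum x ▸ one_ne_zero :
      ∑ i, p i x ≠ 0)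
    have hpos : 0 < ∑ i, f (F i x) := Finset.sum_pos (fun j _ => hf _) ⟨i, Finset.mem_univ i⟩
    rw [Real.log_div hpos.ne' (hf x).ne']
    linarith [sum_mul_log_le_log_sum (fun i _ => hp0 i x) (hpsum x) fun i _ => hf (F i x)]
  have hsum_int : Integrable (fun x => ∑ i, p i x * Real.log (f (F i x))) ν :=
    integrable_finsetSum _ fun i _ => hterm i
  calc 0 = ∫ x, (∑ i, p i x * Real.log (f (F i x)) - Real.log (f x)) ∂ν := by
        rw [integral_sub hsum_int hlog, integral_finsetSum _ fun i _ => hterm i, hsum, sub_self]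
    _ ≤ _ := integral_mono (hsum_int.sub hlog) hint hpoint

lemma integral_log_sum_comp_div_nonneg [IsProbabilityMeasure ν]
    (hF : ∀ i, Measurable (F i)) (hpm : ∀ i, Measurable (p i)) (hp0 : ∀ i x, 0 ≤ p i x)
    (hpsum : ∀ x, ∑ i, p i x = 1)
    (hinv : IsMarkovInvariant F p ν)
    {f : M → ℝ} (hfm : Measurable f) (hf : ∀ x, 0 < f x) {C : ℝ} (hfC : ∀ x, f x ≤ C) :
    0 ≤ ∫ x, Real.log ((∑ i, f (F i x)) / f x) ∂ν := by
  by_cases hint : Integrable (fun x => Real.log ((∑ i, f (F i x)) / f x)) ν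
  swap
  · rw [integral_undef hint]
  obtain ⟨x₀⟩ := nonempty_of_isProbabilityMeasure ν
  obtain ⟨i₀, -, -⟩ := Finset.exists_ne_zero_of_sum_ne_zero (hpsum x₀ ▸ one_ne_zero :
    ∑ i, p i x₀ ≠ 0)
  have hk : (0 : ℝ) < k := Nat.cast_pos.2 i₀.pos
  have hsum_pos : ∀ x, 0 < ∑ i, f (F i x) := fun x =>
    Finset.sum_pos (fun j _ => hf _) ⟨i₀, Finset.mem_univ i₀⟩
  set δ : ℕ → ℝ := fun n => 1 / (n + 1)
  have hδ : ∀ n, 0 < δ n := fun n => Nat.one_div_pos_of_nat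
  have hshift : ∀ n x, ∑ i, (f (F i x) + δ n) = ∑ i, f (F i x) + k * δ n := fun n x => by
    simp [Finset.sum_add_distrib]
  have happrox : ∀ n, 0 ≤ ∫ x, Real.log ((∑ i, (f (F i x) + δ n)) / (f x + δ n)) ∂ν := fun n =>
    integral_log_sum_comp_div_nonneg_of_integrable_log hF hpm hp0 hpsum hinv
      (fun x => (hf x).trans (lt_add_of_pos_right _ (hδ n)))
      (integrable_log_of_le_of_le (hfm.add_const _) (hδ n)
        (fun x => le_add_of_nonneg_left (hf x).le) fun x => add_le_add_left (hfC x) (δ n))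
  refine ge_of_tendsto' (tendsto_integral_of_dominated_convergence
    (fun x => |Real.log ((∑ i, f (F i x)) / f x)| + |Real.log k|) (fun n => ?_)
    (hint.abs.add (integrable_const _)) (fun n => ae_of_all _ fun x => ?_)
    (ae_of_all _ fun x => ?_)) happrox
  · exact Measurable.aestronglyMeasurable (by fun_prop)
  · rw [Real.norm_eq_abs, hshift]
    exact abs_log_add_mul_div_add_le (hsum_pos x) (hf x) hk (hδ n).le
  · simp only [hshift]
    exact (tendsto_log_add_mul_div_add _ (hsum_pos x) (hf x)).comp
      tendsto_one_div_add_atTop_nhds_zero_nat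

end EntropyLowerBound

section EntropyCandidates

variable {M : Type*} [MeasurableSpace M] {k : ℕ} (F : Fin k → M → M) (ν : Measure M)
  [IsProbabilityMeasure ν]

lemma log_card_mem_entropyCandidates : Real.log k ∈ entropyCandidates F ν :=
  ⟨fun _ => 1, measurable_const, fun _ => one_pos, ⟨1, fun _ => le_rfl⟩, by simp⟩

variable {F ν}

lemma nonneg_of_mem_entropyCandidates {p : Fin k → M → ℝ} (hF : ∀ i, Measurable (F i))
    (hpm : ∀ i, Measurable (p i)) (hp0 : ∀ i x, 0 ≤ p i x) (hpsum : ∀ x, ∑ i, p i x = 1)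
    (hinv : IsMarkovInvariant F p ν)
    {r : ℝ} (hr : r ∈ entropyCandidates F ν) : 0 ≤ r := by
  obtain ⟨f, hfm, hf, ⟨C, hfC⟩, rfl⟩ := hr
  exact integral_log_sum_comp_div_nonneg hF hpm hp0 hpsum hinv hfm hf hfC

end EntropyCandidates

theorem stmt_12_general {M : Type*} [MetricSpace M]
    [MeasurableSpace M] [BorelSpace M] {k : ℕ}
    (F : Fin k → M → M) (hF : ∀ i, Continuous (F i))
    (p : Fin k → M → ℝ) (hpm : ∀ i, Measurable (p i))
    (hp0 : ∀ i x, 0 ≤ p i x)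
    (hpsum : ∀ x, ∑ i, p i x = 1)
    (ν : Measure M) [IsProbabilityMeasure ν]
    (hinv : ∀ B : Set M, MeasurableSet B →
      (ν B).toReal = ∑ i, ∫ x in (F i) ⁻¹' B, p i x ∂ν) :
    0 ≤ sInf (entropyCandidates F ν) ∧ sInf (entropyCandidates F ν) ≤ Real.log k := by
  have hnonneg : ∀ r ∈ entropyCandidates F ν, 0 ≤ r := fun _ =>
    nonneg_of_mem_entropyCandidates (fun i => (hF i).measurable) hpm hp0 hpsum hinv
  exact ⟨le_csInf ⟨_, log_card_mem_entropyCandidates F ν⟩ hnonneg,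
    csInf_le ⟨0, hnonneg⟩ (log_card_mem_entropyCandidates F ν)⟩

theorem stmt_12 {M : Type*} [MetricSpace M] [CompactSpace M]
    [MeasurableSpace M] [BorelSpace M] {k : ℕ}
    (F : Fin k → M → M) (hF : ∀ i, Continuous (F i))
    (p : Fin k → M → ℝ) (hpm : ∀ i, Measurable (p i))
    (hp0 : ∀ i x, 0 ≤ p i x) (hp1 : ∀ i x, p i x ≤ 1)
    (hpsum : ∀ x, ∑ i, p i x = 1)
    (ν : Measure M) [IsProbabilityMeasure ν]
    (hinv : ∀ B : Set M, MeasurableSet B →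
      (ν B).toReal = ∑ i, ∫ x in (F i) ⁻¹' B, p i x ∂ν) :
    0 ≤ sInf (entropyCandidates F ν) ∧ sInf (entropyCandidates F ν) ≤ Real.log k :=
  stmt_12_general F hF p hpm hp0 hpsum ν hinv
end
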